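/- For every ε > 0, the probability that the random graph G_n contains a clique on ⌈εn⌉ vertices (equivalently, a K_{⌈εn⌉}-minor with all bags of size 1) tends to 0 as n tends to infinity. -/

import Mathlib

open MeasureTheory
open scoped ENNReal

/-- The vertex set `{a_1, …, a_n, b_1, …, b_n}`: `(i, false)` is `a_i` and `(i, true)` is
`b_i`. -/
abbrev Vtx (n : ℕ) := Fin n × Bool

/-- The index set of unordered pairs `i < j`. -/
abbrev PairIdx (n : ℕ) := {p : Fin n × Fin n // p.1 < p.2}

/-- The sample space: for each pair `i < j`, one of the four possible pairs (encoded by an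
element of `Fin 4` via `code`) is chosen to be the non-edge. -/
abbrev Omega (n : ℕ) := PairIdx n → Fin 4

/-- Encoding of the four pairs `(a_i,a_j), (a_i,b_j), (b_i,a_j), (b_i,b_j)` as `Fin 4`. -/
def code : Bool × Bool → Fin 4
  | (false, false) => 0
  | (false, true) => 1
  | (true, false) => 2
  | (true, true) => 3

instance (n : ℕ) : MeasurableSpace (Omega n) := ⊤

/-- The random graph `G_n` determined by the sample point `ω`: for `i < j`, the vertices
`(i, x)` and `(j, y)` are adjacent iff `(x, y)` is not the uniformly chosen excluded pair
`ω ⟨(i, j), _⟩`; `a_i` and `b_i` are never adjacent. -/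
def Gn (n : ℕ) (ω : Omega n) : SimpleGraph (Vtx n) where
  Adj u v :=
    (∃ h : u.1 < v.1, ω ⟨(u.1, v.1), h⟩ ≠ code (u.2, v.2)) ∨
    (∃ h : v.1 < u.1, ω ⟨(v.1, u.1), h⟩ ≠ code (v.2, u.2))
  symm := by
    constructor
    rintro u v (⟨h1, h2⟩ | ⟨h1, h2⟩)
    · exact Or.inr ⟨h1, h2⟩
    · exact Or.inl ⟨h1, h2⟩
  loopless := by
    constructor
    rintro u (⟨h1, _⟩ | ⟨h1, _⟩) <;> exact absurd h1 (lt_irrefl _)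

/-- The uniform probability measure on the sample space: the excluded pairs are chosen
independently and uniformly at random. -/
noncomputable def Pn (n : ℕ) : Measure (Omega n) :=
  (PMF.uniformOfFintype (Omega n)).toMeasure

/-! Since `a_i` and `b_i` are never adjacent, a clique `S` meets each index at most once, and for
each of the `(#S).choose 2` pairs of indices it meets, the excluded pair chosen for those indices
must avoid one prescribed value: probability `(3/4)` per pair, independently. A union bound over
the at most `4 ^ n` vertex sets bounds the probability of a `k`-clique by
`4 ^ n * (3/4) ^ (k.choose 2)`, and for `k = ⌈εn⌉` the exponent eventually exceeds `8 n`, while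
`4 * (3/4) ^ 8 < 1`. -/

open Finset Filter Topology
open scoped NNReal

theorem PMF.toMeasure_uniformOfFintype_pi_forall_ne {ι α : Type*} [Fintype ι] [DecidableEq ι]
    [Fintype α] [Nonempty α] [MeasurableSpace (ι → α)] [MeasurableSingletonClass (ι → α)]
    (T : Finset ι) (c : ι → α) :
    (PMF.uniformOfFintype (ι → α)).toMeasure {ω | ∀ i ∈ T, ω i ≠ c i}
      = ((Fintype.card α - 1 : ℝ≥0∞) / Fintype.card α) ^ #T := by
  classical
  set box : ι → Finset α := fun i => if i ∈ T then {c i}ᶜ else univ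
  have hbox : {ω : ι → α | ∀ i ∈ T, ω i ≠ c i} = Fintype.piFinset box := by
    ext ω
    simp only [Set.mem_ofPred_eq, Fintype.coe_piFinset, Set.mem_pi, Set.mem_univ, true_imp_iff]
    refine forall_congr' fun i => ?_
    by_cases hi : i ∈ T <;> simp [box, hi]
  rw [hbox, PMF.toMeasure_uniformOfFintype_apply _ (Finset.measurableSet _)]
  calc (Fintype.card (Fintype.piFinset box : Set (ι → α)) : ℝ≥0∞) / Fintype.card (ι → α)
      = ∏ i, ((#(box i) : ℝ≥0∞) / Fintype.card α) := by
        rw [ENNReal.prod_div_distrib_of_ne_top (by simp), prod_const, card_univ]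
        simp only [Finset.coe_sort_coe, Fintype.card_coe, Fintype.card_piFinset, Fintype.card_fun]
        push_cast
        rfl
    _ = ∏ i, if i ∈ T then (Fintype.card α - 1 : ℝ≥0∞) / Fintype.card α else 1 := by
        refine prod_congr rfl fun i _ => ?_
        split_ifs <;> simp [box, *, Finset.card_compl, ENNReal.div_self]
    _ = _ := by rw [Fintype.prod_ite_mem, prod_const]

instance (n : ℕ) : DiscreteMeasurableSpace (Omega n) := ⟨fun _ => MeasurableSpace.measurableSet_top⟩

theorem mk_decide_mem_of_mem_image_fst {α : Type*} [DecidableEq α] {S : Finset (α × Bool)}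
    (hS : Set.InjOn Prod.fst (S : Set (α × Bool))) {i : α} (hi : i ∈ S.image Prod.fst) :
    (i, decide ((i, true) ∈ S)) ∈ S := by
  obtain ⟨⟨i, x⟩, hu, rfl⟩ := mem_image.1 hi
  cases x with
  | false =>
    have : (i, true) ∉ S := fun h => by simpa using hS h hu rfl
    simpa [this] using hu
  | true => simp [hu]

namespace Gn

variable {n : ℕ} {ω : Omega n}

theorem fst_ne_of_adj {u v : Vtx n} (h : (Gn n ω).Adj u v) : u.1 ≠ v.1 := by
  rcases h with ⟨h, -⟩ | ⟨h, -⟩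
  exacts [h.ne, h.ne']

theorem adj_iff_of_lt {i j : Fin n} (h : i < j) (x y : Bool) :
    (Gn n ω).Adj (i, x) (j, y) ↔ ω ⟨(i, j), h⟩ ≠ code (x, y) := by
  simp [Gn, h, h.not_gt]

theorem injOn_fst_of_isClique {S : Set (Vtx n)} (h : (Gn n ω).IsClique S) : S.InjOn Prod.fst :=
  fun _ hu _ hv huv => by_contra fun hne => fst_ne_of_adj (h hu hv hne) huv

end Gn

theorem Pn_isClique_le (n : ℕ) (S : Finset (Vtx n)) :
    Pn n {ω | (Gn n ω).IsClique (S : Set (Vtx n))} ≤ (3 / 4 : ℝ≥0∞) ^ ((#S).choose 2) := by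
  classical
  by_cases hS : Set.InjOn Prod.fst (S : Set (Vtx n))
  swap
  · have : {ω | (Gn n ω).IsClique (S : Set (Vtx n))} = ∅ :=
      Set.eq_empty_of_forall_notMem fun ω hω => hS (Gn.injOn_fst_of_isClique hω)
    simp [this]
  set I := S.image Prod.fst
  set T : Finset (PairIdx n) := (I ×ˢ I).subtype fun p => p.1 < p.2
  set c : PairIdx n → Fin 4 := fun p => code ((p.1.1, true) ∈ S, (p.1.2, true) ∈ S)
  have hsub : {ω | (Gn n ω).IsClique (S : Set (Vtx n))} ⊆ {ω | ∀ p ∈ T, ω p ≠ c p} := by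
    rintro ω hω ⟨⟨i, j⟩, hij⟩ hp
    obtain ⟨hi, hj⟩ := mem_product.1 (mem_subtype.1 hp)
    exact (Gn.adj_iff_of_lt hij _ _).1 <| hω (mk_decide_mem_of_mem_image_fst hS hi)
      (mk_decide_mem_of_mem_image_fst hS hj) (by simp [hij.ne])
  have hT : #T = (#S).choose 2 := by
    rw [card_subtype, card_product_filter_lt, card_image_of_injOn hS]
  calc Pn n {ω | (Gn n ω).IsClique (S : Set (Vtx n))}
      ≤ Pn n {ω | ∀ p ∈ T, ω p ≠ c p} := measure_mono hsub
    _ = (3 / 4 : ℝ≥0∞) ^ #T := by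
      rw [Pn, PMF.toMeasure_uniformOfFintype_pi_forall_ne, Fintype.card_fin]
      congr
      norm_cast
    _ = (3 / 4 : ℝ≥0∞) ^ ((#S).choose 2) := by rw [hT]

theorem Pn_exists_isClique_le (n k : ℕ) :
    Pn n {ω | ∃ S : Finset (Vtx n), #S = k ∧ (Gn n ω).IsClique (S : Set (Vtx n))}
      ≤ 4 ^ n * (3 / 4 : ℝ≥0∞) ^ (k.choose 2) := by
  set E : Finset (Vtx n) → Set (Omega n) := fun S => {ω | (Gn n ω).IsClique (S : Set (Vtx n))}
  calc Pn n {ω | ∃ S : Finset (Vtx n), #S = k ∧ (Gn n ω).IsClique (S : Set (Vtx n))}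
      ≤ Pn n (⋃ S ∈ powersetCard k univ, E S) := by
        refine measure_mono fun ω ⟨S, hS, hω⟩ => ?_
        exact Set.mem_biUnion (mem_powersetCard_univ.2 hS) hω
    _ ≤ ∑ S ∈ powersetCard k univ, Pn n (E S) := measure_biUnion_finset_le _ _
    _ ≤ #(powersetCard k (univ : Finset (Vtx n))) • (3 / 4 : ℝ≥0∞) ^ (k.choose 2) :=
        sum_le_card_nsmul _ _ _ fun S hS => by
          rw [← (mem_powersetCard_univ.1 hS)]
          exact Pn_isClique_le n S
    _ ≤ 4 ^ n * (3 / 4 : ℝ≥0∞) ^ (k.choose 2) := by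
        rw [nsmul_eq_mul, card_powersetCard, card_univ, Fintype.card_prod, Fintype.card_fin,
          Fintype.card_bool]
        gcongr
        calc (((n * 2).choose k : ℕ) : ℝ≥0∞) ≤ ((2 ^ (n * 2) : ℕ) : ℝ≥0∞) := by
              exact_mod_cast Nat.choose_le_two_pow _ _
          _ = 4 ^ n := by norm_num [pow_mul']

theorem eventually_mul_le_choose_two_ceil {ε : ℝ} (hε : 0 < ε) (m : ℕ) :
    ∀ᶠ n : ℕ in atTop, m * n ≤ (⌈ε * n⌉₊).choose 2 := by
  obtain ⟨N, hN⟩ := exists_nat_gt ((1 + 2 * m / ε) / ε)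
  filter_upwards [eventually_ge_atTop N] with n hn
  set k := ⌈ε * n⌉₊
  have hk : ε * n ≤ k := Nat.le_ceil _
  have hnN : (N : ℝ) ≤ n := by exact_mod_cast hn
  have hk1 : 2 * m / ε ≤ k - 1 := by
    rw [div_lt_iff₀ hε] at hN
    nlinarith
  suffices (m * n : ℝ) ≤ k * (k - 1) / 2 by
    rw [← Nat.cast_choose_two] at this
    exact_mod_cast this
  calc (m * n : ℝ) = (ε * n) * (2 * m / ε) / 2 := by field_simp
    _ ≤ k * (k - 1) / 2 := by gcongr

theorem tendsto_four_pow_mul_three_quarters_pow {f : ℕ → ℕ} (hf : ∀ᶠ n in atTop, 8 * n ≤ f n) :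
    Tendsto (fun n => 4 ^ n * (3 / 4 : ℝ≥0∞) ^ f n) atTop (𝓝 0) := by
  have hr : (4 : ℝ≥0∞) * (3 / 4) ^ 8 < 1 := by
    rw [show (3 / 4 : ℝ≥0∞) = ((3 / 4 : ℝ≥0) : ℝ≥0∞) by norm_num]
    norm_cast
    norm_num
  refine tendsto_of_tendsto_of_tendsto_of_le_of_le' tendsto_const_nhds
    (ENNReal.tendsto_pow_atTop_nhds_zero_of_lt_one hr) (.of_forall fun _ => zero_le) ?_
  filter_upwards [hf] with n hn
  calc 4 ^ n * (3 / 4 : ℝ≥0∞) ^ f n ≤ 4 ^ n * (3 / 4) ^ (8 * n) := by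
        gcongr 4 ^ n * ?_
        exact pow_le_pow_of_le_one zero_le (ENNReal.div_le_of_le_mul (by norm_num)) hn
    _ = (4 * (3 / 4) ^ 8) ^ n := by rw [mul_pow, pow_mul]

open Filter in
/-- For every `ε > 0`, the probability that the random graph `G_n` contains a clique on
`⌈εn⌉` vertices tends to `0` as `n` tends to infinity. -/
theorem statement14 (ε : ℝ) (hε : 0 < ε) :
    Tendsto
      (fun n => Pn n {ω | ∃ S : Finset (Vtx n),
        S.card = ⌈ε * (n : ℝ)⌉₊ ∧ (Gn n ω).IsClique (S : Set (Vtx n))})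
      atTop (nhds (0 : ℝ≥0∞)) :=
  tendsto_of_tendsto_of_tendsto_of_le_of_le tendsto_const_nhds
    (tendsto_four_pow_mul_three_quarters_pow (eventually_mul_le_choose_two_ceil hε 8))
    (fun _ => zero_le) (fun n => Pn_exists_isClique_le n _)
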